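/- Assume (KV). Then there exist constants C > 0 and t₁ ≥ t₀ such that for every real t ≥ t₁, |∫_1^2 (ζ′(σ+it)/ζ(σ+it)) dσ| ≤ (2/3)·log log t + C·log log log t. (The imaginary part of this integral is the change of the continuous argument of ζ along the horizontal segment from 1+it to 2+it, so the continuous argument of ζ(1+it) is bounded by (2/3)·log log t + O(log log log t) up to the bounded quantity arg ζ(2+it).) -/

import Mathlib

/-!
Split `[1, 2]` at `σ₀ = 1 + 1/L`, where `L = (log t)^{2/3} (log log t)^{1/3}`. On `[1, σ₀]` the
(KV) bound `|ζ'/ζ| ≤ A L` contributes at most `A`. On `[σ₀, 2]`, since `-ζ'/ζ = ∑ Λ(n) n^{-s}` has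
nonnegative coefficients, `|ζ'/ζ(σ + it)| ≤ -ζ'/ζ(σ)`, whose integral is
`log ζ(σ₀) - log ζ(2) ≤ log (σ₀/(σ₀ - 1)) = log (L + 1)`; finally
`log L = (2/3) log log t + (1/3) log log log t`.
-/

open Complex Real

/-- The Korobov–Vinogradov/Ford hypothesis with constants `A`, `a`, `t₀`:
a zero-free region inside the critical strip together with bounds on
`ζ′/ζ`, `1/ζ` there, and a bound on `ζ` in the right half of the critical strip. -/
def KV (A a t₀ : ℝ) : Prop :=
  0 < A ∧ 0 < a ∧ a ≤ 1 ∧ 16 < t₀ ∧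
  (∀ t σ : ℝ, t₀ ≤ t →
      1 - a / ((Real.log t) ^ ((2 : ℝ)/3) * (Real.log (Real.log t)) ^ ((1 : ℝ)/3)) ≤ σ →
      riemannZeta (σ + t * Complex.I) ≠ 0 ∧
      ‖deriv riemannZeta (σ + t * Complex.I) / riemannZeta (σ + t * Complex.I)‖ ≤
        A * (Real.log t) ^ ((2 : ℝ)/3) * (Real.log (Real.log t)) ^ ((1 : ℝ)/3) ∧
      ‖1 / riemannZeta (σ + t * Complex.I)‖ ≤
        A * (Real.log t) ^ ((2 : ℝ)/3) * (Real.log (Real.log t)) ^ ((1 : ℝ)/3)) ∧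
  (∀ t σ : ℝ, t₀ ≤ t → 1/2 ≤ σ → σ ≤ 1 →
      ‖riemannZeta (σ + t * Complex.I)‖ ≤
        A * (Real.log t) ^ ((2 : ℝ)/3) * (1 + t ^ (100 * (1 - σ) ^ ((3 : ℝ)/2))))

open ArithmeticFunction LSeries
open scoped LSeries.notation

lemma continuousAt_logDeriv_riemannZeta {s : ℂ} (hs₁ : s ≠ 1) (hs : riemannZeta s ≠ 0) :
    ContinuousAt (fun z => deriv riemannZeta z / riemannZeta z) s :=
  (analyticOn_riemannZeta.deriv s hs₁).continuousAt.div
    (differentiableAt_riemannZeta hs₁).continuousAt hs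

lemma intervalIntegrable_logDeriv_riemannZeta {a b t : ℝ} (ht : t ≠ 0) (ha : 1 ≤ a)
    (hb : 1 ≤ b) :
    IntervalIntegrable (fun σ : ℝ => deriv riemannZeta (σ + t * I) / riemannZeta (σ + t * I))
      MeasureTheory.volume a b := by
  refine ContinuousOn.intervalIntegrable fun σ hσ => ContinuousAt.continuousWithinAt ?_
  have hσ₁ : 1 ≤ σ := le_trans (le_min ha hb) hσ.1
  have hline : (σ + t * I : ℂ) ≠ 1 := fun h => ht (by simpa using congrArg im h)
  exact (continuousAt_logDeriv_riemannZeta hline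
    (riemannZeta_ne_zero_of_one_le_re (by simpa using hσ₁))).comp
    (f := fun x : ℝ => (x : ℂ) + t * I) (by fun_prop)

lemma logDeriv_riemannZeta_eq_neg_LSeries_vonMangoldt {s : ℂ} (hs : 1 < s.re) :
    deriv riemannZeta s / riemannZeta s = -L ↗Λ s := by
  rw [LSeries_vonMangoldt_eq_deriv_riemannZeta_div hs, neg_div, neg_neg]

lemma norm_logDeriv_riemannZeta_le {x : ℝ} (hx : 1 < x) (t : ℝ) :
    ‖deriv riemannZeta (x + t * I) / riemannZeta (x + t * I)‖ ≤
      -(deriv riemannZeta x / riemannZeta x).re := by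
  have hre : 1 < (x + t * I : ℂ).re := by simpa using hx
  have hxre : 1 < (x : ℂ).re := by simpa using hx
  rw [logDeriv_riemannZeta_eq_neg_LSeries_vonMangoldt hre,
    logDeriv_riemannZeta_eq_neg_LSeries_vonMangoldt hxre, norm_neg, neg_re, neg_neg, LSeries,
    LSeries, re_tsum (LSeriesSummable_vonMangoldt hxre)]
  calc ‖∑' n, term ↗Λ (x + t * I) n‖ ≤ ∑' n, ‖term ↗Λ (x + t * I) n‖ :=
        norm_tsum_le_tsum_norm (LSeriesSummable_vonMangoldt hre).norm
    _ = ∑' n, (term ↗Λ x n).re := by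
        refine tsum_congr fun n => ?_
        rw [re_eq_norm.mpr (term_nonneg (by simp [vonMangoldt_nonneg]) x), norm_term_eq,
          norm_term_eq]
        simp

lemma riemannZeta_ofReal_re_le {x : ℝ} (hx : 1 < x) : (riemannZeta x).re ≤ x / (x - 1) := by
  have hterm : ∀ n : ℕ, 1 / ((n : ℂ) + 1) ^ (x : ℂ) = ((1 / ((n : ℝ) + 1) ^ x : ℝ) : ℂ) := by
    intro n
    rw [ofReal_div, ofReal_one, ofReal_cpow (by positivity)]
    push_cast
    rfl
  rw [zeta_eq_tsum_one_div_nat_add_one_cpow (by simpa using hx), tsum_congr hterm,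
    ← ofReal_tsum, ofReal_re]
  have htail := ZetaAsymptotics.zeta_limit_aux1 hx
  have hnonneg : 0 ≤ x * ZetaAsymptotics.termTSum x :=
    mul_nonneg (by linarith) (tsum_nonneg fun n => ZetaAsymptotics.term_nonneg _ _)
  have : x / (x - 1) = 1 + 1 / (x - 1) := by field_simp [(by linarith : x - 1 ≠ 0)]; ring
  linarith

lemma log_riemannZeta_ofReal_re_nonneg {x : ℝ} (hx : 1 < x) :
    0 ≤ Real.log (riemannZeta x).re := by
  rw [log_riemannZeta_eq hx]
  exact tsum_nonneg fun n => by have := Real.log_natCast_nonneg n; positivity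

lemma hasDerivAt_log_riemannZeta_ofReal_re {x : ℝ} (hx : 1 < x) :
    HasDerivAt (fun y : ℝ => Real.log (riemannZeta y).re)
      (deriv riemannZeta x / riemannZeta x).re x := by
  have hx₁ : (x : ℂ) ≠ 1 := by exact_mod_cast hx.ne'
  have hζ := (differentiableAt_riemannZeta hx₁).hasDerivAt.real_of_complex
  convert hζ.log (riemannZeta_re_pos_of_one_lt hx).ne' using 1
  rw [← re_add_im (riemannZeta x), riemannZeta_im_eq_zero_of_one_lt hx]
  simp

lemma norm_integral_logDeriv_riemannZeta_le {a b t : ℝ} (ha : 1 < a) (hab : a ≤ b) :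
    ‖∫ σ in a..b, deriv riemannZeta (σ + t * I) / riemannZeta (σ + t * I)‖ ≤
      Real.log (a / (a - 1)) := by
  have hmem : ∀ x ∈ Set.uIcc a b, 1 < x := fun x hx => by
    rw [Set.uIcc_of_le hab] at hx
    exact ha.trans_le hx.1
  have hcont : ContinuousOn (fun x : ℝ => -(deriv riemannZeta x / riemannZeta x).re)
      (Set.uIcc a b) := fun x hx => by
    have hx₁ : (x : ℂ) ≠ 1 := by exact_mod_cast (hmem x hx).ne'
    exact (continuous_re.continuousAt.comp ((continuousAt_logDeriv_riemannZeta hx₁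
      (riemannZeta_ne_zero_of_one_lt_re (by simpa using hmem x hx))).comp
      continuous_ofReal.continuousAt)).neg.continuousWithinAt
  have hderiv : ∀ x ∈ Set.uIcc a b, HasDerivAt (fun y : ℝ => -Real.log (riemannZeta y).re)
      (-(deriv riemannZeta x / riemannZeta x).re) x := fun x hx =>
    (hasDerivAt_log_riemannZeta_ofReal_re (hmem x hx)).neg
  calc ‖∫ σ in a..b, deriv riemannZeta (σ + t * I) / riemannZeta (σ + t * I)‖
      ≤ ∫ x in a..b, -(deriv riemannZeta x / riemannZeta x).re :=
        intervalIntegral.norm_integral_le_of_norm_le hab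
          (Filter.Eventually.of_forall fun x hx =>
            norm_logDeriv_riemannZeta_le (ha.trans hx.1) t) hcont.intervalIntegrable
    _ = Real.log (riemannZeta a).re - Real.log (riemannZeta b).re := by
        rw [intervalIntegral.integral_eq_sub_of_hasDerivAt hderiv hcont.intervalIntegrable]
        ring
    _ ≤ Real.log (a / (a - 1)) := by
        have := Real.log_le_log (riemannZeta_re_pos_of_one_lt ha) (riemannZeta_ofReal_re_le ha)
        linarith [log_riemannZeta_ofReal_re_nonneg (ha.trans_le hab)]

lemma norm_integral_logDeriv_riemannZeta_le_of_bound {t M B : ℝ} (ht : t ≠ 0) (hM : 1 ≤ M)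
    (hbound : ∀ σ ∈ Set.Icc 1 (1 + 1 / M),
      ‖deriv riemannZeta (σ + t * I) / riemannZeta (σ + t * I)‖ ≤ B * M) :
    ‖∫ σ in (1 : ℝ)..2, deriv riemannZeta (σ + t * I) / riemannZeta (σ + t * I)‖ ≤
      B + Real.log (2 * M) := by
  have hM₀ : 0 < M := one_pos.trans_le hM
  have hinv : 0 < 1 / M := by positivity
  have hinv₁ : 1 / M ≤ 1 := (div_le_one hM₀).mpr hM
  set s := 1 + 1 / M
  rw [← intervalIntegral.integral_add_adjacent_intervals (b := s)
    (intervalIntegrable_logDeriv_riemannZeta ht le_rfl (by linarith))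
    (intervalIntegrable_logDeriv_riemannZeta ht (by linarith) one_le_two)]
  calc _ ≤ _ := norm_add_le _ _
    _ ≤ B * M * |s - 1| + Real.log (s / (s - 1)) := by
        gcongr
        · refine intervalIntegral.norm_integral_le_of_norm_le_const fun σ hσ => hbound σ ?_
          rw [Set.uIoc_of_le (by linarith)] at hσ
          exact Set.Ioc_subset_Icc_self hσ
        · exact norm_integral_logDeriv_riemannZeta_le (by linarith) (by linarith)
    _ = B + Real.log (M + 1) := by
        congr 1
        · simp only [s, add_sub_cancel_left, abs_of_pos hinv]
          field_simp
        · congr 1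
          simp only [s, add_sub_cancel_left]
          field_simp
    _ ≤ B + Real.log (2 * M) := by gcongr; linarith

-- The zero-free region in `KV` has width `a / kvScale t`.
noncomputable def kvScale (t : ℝ) : ℝ :=
  Real.log t ^ ((2 : ℝ) / 3) * Real.log (Real.log t) ^ ((1 : ℝ) / 3)

lemma one_le_kvScale {t : ℝ} (h₁ : 1 ≤ Real.log t) (h₂ : 1 ≤ Real.log (Real.log t)) :
    1 ≤ kvScale t :=
  one_le_mul_of_one_le_of_one_le (one_le_rpow h₁ (by norm_num)) (one_le_rpow h₂ (by norm_num))

lemma log_kvScale {t : ℝ} (h₁ : 0 < Real.log t) (h₂ : 0 < Real.log (Real.log t)) :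
    Real.log (kvScale t) =
      2 / 3 * Real.log (Real.log t) + 1 / 3 * Real.log (Real.log (Real.log t)) := by
  rw [kvScale, Real.log_mul (by positivity) (by positivity), Real.log_rpow h₁,
    Real.log_rpow h₂]

lemma KV.norm_logDeriv_riemannZeta_le {A a t₀ t σ : ℝ} (hKV : KV A a t₀) (ht : t₀ ≤ t)
    (hL : 0 < kvScale t) (hσ : 1 ≤ σ) :
    ‖deriv riemannZeta (σ + t * I) / riemannZeta (σ + t * I)‖ ≤ A * kvScale t := by
  have hσ' : 1 - a / kvScale t ≤ σ := by
    have : 0 < a / kvScale t := div_pos hKV.2.1 hL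
    linarith
  rw [kvScale, ← mul_assoc]
  exact (hKV.2.2.2.2.1 t σ ht hσ').2.1

/-- Assuming (KV), there exist `C > 0` and `t₁ ≥ t₀` such that for every `t ≥ t₁`,
`|∫_1^2 ζ′(σ+it)/ζ(σ+it) dσ| ≤ (2/3)·log log t + C·log log log t`. -/
theorem arg_zeta_bound (A a t₀ : ℝ) (hKV : KV A a t₀) :
    ∃ C > 0, ∃ t₁ ≥ t₀, ∀ t ≥ t₁,
      ‖∫ σ in (1:ℝ)..2,
          deriv riemannZeta (σ + t * Complex.I) / riemannZeta (σ + t * Complex.I)‖ ≤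
        2/3 * Real.log (Real.log t) + C * Real.log (Real.log (Real.log t)) := by
  have hA := hKV.1
  refine ⟨A + Real.log 2 + 1 / 3, by positivity, max t₀ (Real.exp (Real.exp (Real.exp 1))),
    le_max_left _ _, fun t ht => ?_⟩
  have ht_pos : 0 < t := (exp_pos _).trans_le (le_of_max_le_right ht)
  have h₁ : Real.exp (Real.exp 1) ≤ Real.log t :=
    (le_log_iff_exp_le ht_pos).mpr (le_of_max_le_right ht)
  have hlog : 0 < Real.log t := (exp_pos _).trans_le h₁
  have h₂ : Real.exp 1 ≤ Real.log (Real.log t) := (le_log_iff_exp_le hlog).mpr h₁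
  have hloglog : 0 < Real.log (Real.log t) := (exp_pos _).trans_le h₂
  have h₃ : 1 ≤ Real.log (Real.log (Real.log t)) := (le_log_iff_exp_le hloglog).mpr h₂
  have hL : 1 ≤ kvScale t :=
    one_le_kvScale ((one_le_exp (exp_pos 1).le).trans h₁) ((one_le_exp zero_le_one).trans h₂)
  calc _ ≤ A + Real.log (2 * kvScale t) :=
        norm_integral_logDeriv_riemannZeta_le_of_bound ht_pos.ne' hL fun σ hσ =>
          hKV.norm_logDeriv_riemannZeta_le (le_of_max_le_left ht) (by positivity) hσ.1
    _ = A + Real.log 2 + 2 / 3 * Real.log (Real.log t)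
          + 1 / 3 * Real.log (Real.log (Real.log t)) := by
        rw [Real.log_mul two_ne_zero (by positivity), log_kvScale hlog hloglog]
        ring
    _ ≤ _ := by nlinarith [Real.log_nonneg one_le_two]
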